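/- Let G be a group generated by a finite set X whose growth is subexponential, i.e. (log γ_X(n))/n → 0 as n → ∞, and let N be a normal subgroup of G such that G/N is isomorphic to ℤ. Then N is finitely generated. -/

import Mathlib

/-- The word length of `g` with respect to the generating set `X`: the least `n`
such that `g` is a product of `n` elements of `X ∪ X⁻¹` (with length `0` for `1`). -/
noncomputable def wordLength {G : Type*} [Group G] (X : Set G) (g : G) : ℕ :=
  sInf {n : ℕ | ∃ l : List G, l.length = n ∧ (∀ x ∈ l, x ∈ X ∨ x⁻¹ ∈ X) ∧ l.prod = g}

/-- The growth function `γ_X(n) = |{g ∈ G : ℓ_X(g) ≤ n}|`. -/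
noncomputable def growth {G : Type*} [Group G] (X : Set G) (n : ℕ) : ℕ :=
  Set.ncard {g : G | wordLength X g ≤ n}

/-!
Let `φ : G → ℤ` be the quotient map and pick `t` with `φ t = 1`. Then `N` is generated by the
conjugates `t^i u t^{-i}` (`i ∈ ℤ`) of the finitely many elements `u = x t^{-φ x} ∈ N`, `x ∈ X`.
For fixed `u`, the `2^n` words `u^{ε₁} t u^{ε₂} t ⋯ u^{εₙ} t` have length `O(n)`, so
subexponential growth forces two of them to coincide; cancelling the common prefix shows that
`u` lies in the subgroup generated by `t^i u t^{-i}`, `1 ≤ i ≤ n`. Doing the same with `t⁻¹`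
gives a bound `m` such that the subgroup generated by the conjugates with `|i| ≤ m` is normalised
by `t`, hence contains all of them, hence is `N`.
-/

open Subgroup Set Filter Topology
open scoped Pointwise

section

variable {G : Type*} [Group G]

theorem exists_list_length_eq_wordLength {X : Set G} (hX : closure X = ⊤) (g : G) :
    ∃ l : List G, l.length = wordLength X g ∧ (∀ x ∈ l, x ∈ X ∨ x⁻¹ ∈ X) ∧ l.prod = g := by
  have hg : g ∈ (closure X).toSubmonoid := hX ▸ mem_top g
  rw [closure_toSubmonoid] at hg
  obtain ⟨l, hl, rfl⟩ := Submonoid.exists_list_of_mem_closure hg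
  refine Nat.sInf_mem (s := {n | ∃ w : List G, w.length = n ∧ (∀ x ∈ w, x ∈ X ∨ x⁻¹ ∈ X) ∧
    w.prod = l.prod}) ⟨l.length, l, rfl, fun x hx => ?_, rfl⟩
  simpa [or_comm] using hl x hx

theorem wordLength_list_prod_le (X : Set G) {l : List G} (hl : ∀ x ∈ l, x ∈ X ∨ x⁻¹ ∈ X) :
    wordLength X l.prod ≤ l.length :=
  Nat.sInf_le ⟨l, rfl, hl, rfl⟩

theorem wordLength_one (X : Set G) : wordLength X 1 = 0 :=
  Nat.le_zero.mp (wordLength_list_prod_le X (l := []) (by simp))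

theorem wordLength_mul_le {X : Set G} (hX : closure X = ⊤) (g h : G) :
    wordLength X (g * h) ≤ wordLength X g + wordLength X h := by
  obtain ⟨l₁, hlen₁, hl₁, rfl⟩ := exists_list_length_eq_wordLength hX g
  obtain ⟨l₂, hlen₂, hl₂, rfl⟩ := exists_list_length_eq_wordLength hX h
  rw [← hlen₁, ← hlen₂, ← List.length_append, ← List.prod_append]
  exact wordLength_list_prod_le X fun x hx => (List.mem_append.1 hx).elim (hl₁ x) (hl₂ x)

theorem finite_setOf_wordLength_le {X : Finset G} (hX : closure (X : Set G) = ⊤) (m : ℕ) :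
    {g | wordLength (X : Set G) g ≤ m}.Finite := by
  classical
  set S : Finset G := X ∪ X⁻¹ ∪ {1}
  have hprod : ∀ l : List G, (∀ x ∈ l, x ∈ (X : Set G) ∨ x⁻¹ ∈ (X : Set G)) →
      l.prod ∈ S ^ l.length := by
    intro l hl
    induction l with
    | nil => simp
    | cons x l ih =>
      rw [List.prod_cons, List.length_cons, pow_succ']
      refine Finset.mul_mem_mul ?_ (ih fun y hy => hl y (List.mem_cons_of_mem x hy))
      rcases hl x List.mem_cons_self with h | h <;> rw [Finset.mem_coe] at h <;> simp [S, h]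
  refine (S ^ m).finite_toSet.subset fun g hg => ?_
  obtain ⟨l, hlen, hl, rfl⟩ := exists_list_length_eq_wordLength hX g
  exact Finset.pow_subset_pow_right (by simp [S]) (hlen.trans_le hg) (hprod l hl)

theorem exists_lt_two_pow_of_tendsto_log_div {f : ℕ → ℕ}
    (hf : Tendsto (fun n : ℕ => Real.log (f n) / n) atTop (𝓝 0)) {C : ℕ} (hC : 0 < C) :
    ∃ n, f (C * n) < 2 ^ n := by
  by_contra! h
  have hsub : Tendsto (fun n : ℕ => Real.log (f (C * n)) / ((C * n : ℕ) : ℝ)) atTop (𝓝 0) :=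
    hf.comp (tendsto_id.const_mul_atTop' hC)
  have hlower : ∀ᶠ n : ℕ in atTop,
      Real.log 2 / C ≤ Real.log (f (C * n)) / ((C * n : ℕ) : ℝ) := by
    filter_upwards [eventually_ge_atTop 1] with n hn
    have hlog : n * Real.log 2 ≤ Real.log (f (C * n)) := by
      rw [← Real.log_pow]
      exact Real.log_le_log (by positivity) (by exact_mod_cast h n)
    rw [div_le_div_iff₀ (by positivity) (by positivity)]
    push_cast
    nlinarith [(by positivity : (0 : ℝ) ≤ C)]
  have := ge_of_tendsto hsub hlower
  have : 0 < Real.log 2 / C := div_pos (Real.log_pos one_lt_two) (by exact_mod_cast hC)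
  linarith

section Conjugates

variable {t : G}

def zpowConjugates (t : G) (S : Set ℤ) (U : Set G) : Set G :=
  image2 (fun i u => t ^ i * u * (t ^ i)⁻¹) S U

theorem conj_mem_of_mem_closure {s : Set G} {K : Subgroup G} {g : G}
    (hs : ∀ x ∈ s, t * x * t⁻¹ ∈ K) (hg : g ∈ closure s) : t * g * t⁻¹ ∈ K := by
  have : t * g * t⁻¹ ∈ (closure s).map (MulAut.conj t).toMonoidHom := ⟨g, hg, rfl⟩
  rw [MonoidHom.map_closure] at this
  exact (closure_le K).2 (by rintro _ ⟨x, hx, rfl⟩; exact hs x hx) this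

theorem mem_normalizer_closure {s : Set G} (h₁ : ∀ x ∈ s, t * x * t⁻¹ ∈ closure s)
    (h₂ : ∀ x ∈ s, t⁻¹ * x * t⁻¹⁻¹ ∈ closure s) : t ∈ normalizer (closure s : Set G) := by
  refine mem_normalizer_iff.2 fun g => ⟨conj_mem_of_mem_closure h₁, fun hg => ?_⟩
  simpa [mul_assoc] using conj_mem_of_mem_closure h₂ hg

theorem zpowConjugates_inv (S : Set ℤ) (U : Set G) :
    zpowConjugates t⁻¹ S U = zpowConjugates t (-S) U := by
  ext g
  constructor
  · rintro ⟨i, hi, u, hu, rfl⟩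
    exact ⟨-i, by simpa using hi, u, hu, by simp [zpow_neg]⟩
  · rintro ⟨i, hi, u, hu, rfl⟩
    exact ⟨-i, hi, u, hu, by simp [zpow_neg]⟩

theorem zpow_conj_mem_closure_zpowConjugates {S S' : Set ℤ} {U : Set G} {k : ℤ}
    (hSS' : ∀ i ∈ S, k + i ∈ S') {g : G} (hg : g ∈ closure (zpowConjugates t S U)) :
    t ^ k * g * (t ^ k)⁻¹ ∈ closure (zpowConjugates t S' U) := by
  refine conj_mem_of_mem_closure ?_ hg
  rintro _ ⟨i, hi, u, hu, rfl⟩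
  exact subset_closure ⟨k + i, hSS' i hi, u, hu, by group⟩

theorem conj_mem_closure_zpowConjugates_Icc {U : Set G} {m : ℕ}
    (hU : U ⊆ closure (zpowConjugates t (Icc (-m) (-1)) U)) :
    ∀ g ∈ zpowConjugates t (Icc (-m) m) U,
      t * g * t⁻¹ ∈ closure (zpowConjugates t (Icc (-m) m) U) := by
  rintro _ ⟨i, ⟨hi₁, hi₂⟩, u, hu, rfl⟩
  have hshift : t * (t ^ i * u * (t ^ i)⁻¹) * t⁻¹ = t ^ (1 + i) * u * (t ^ (1 + i))⁻¹ := by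
    group
  rw [hshift]
  rcases hi₂.lt_or_eq with hi | rfl
  · exact subset_closure ⟨1 + i, ⟨by omega, by omega⟩, u, hu, rfl⟩
  -- `t^(m+1) u t^(-m-1)` is a word in the conjugates `t^(m+1+j) U t^(-m-1-j)`, `-m ≤ j ≤ -1`.
  · refine zpow_conj_mem_closure_zpowConjugates ?_ (hU hu)
    rintro j ⟨hj₁, hj₂⟩
    exact ⟨by omega, by omega⟩

theorem mem_normalizer_closure_zpowConjugates_Icc {U : Set G} {m : ℕ}
    (hpos : U ⊆ closure (zpowConjugates t (Icc 1 m) U))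
    (hneg : U ⊆ closure (zpowConjugates t (Icc (-m) (-1)) U)) :
    t ∈ normalizer (closure (zpowConjugates t (Icc (-m) m) U) : Set G) := by
  have hinv : zpowConjugates t⁻¹ (Icc (-m) m) U = zpowConjugates t (Icc (-m) m) U := by
    rw [zpowConjugates_inv, neg_Icc, neg_neg]
  refine mem_normalizer_closure (conj_mem_closure_zpowConjugates_Icc hneg) ?_
  rw [← hinv]
  exact conj_mem_closure_zpowConjugates_Icc
    (by simpa only [zpowConjugates_inv, neg_Icc, neg_neg] using hpos)

end Conjugates

section MilnorWord

variable (u t : G)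

def milnorWord : List Bool → G
  | [] => 1
  | b :: l => (if b then u else 1) * t * milnorWord l

theorem wordLength_milnorWord_le {X : Set G} (hX : closure X = ⊤) (l : List Bool) :
    wordLength X (milnorWord u t l) ≤ l.length * (wordLength X u + wordLength X t) := by
  induction l with
  | nil => simp [milnorWord, wordLength_one]
  | cons b l ih =>
    have hb : wordLength X (if b then u else 1) ≤ wordLength X u := by
      cases b <;> simp [wordLength_one]
    calc wordLength X ((if b then u else 1) * t * milnorWord u t l)
        ≤ wordLength X (if b then u else 1) + wordLength X t + wordLength X (milnorWord u t l) :=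
          (wordLength_mul_le hX _ _).trans (by gcongr; exact wordLength_mul_le hX _ _)
      _ ≤ (b :: l).length * (wordLength X u + wordLength X t) := by
          rw [List.length_cons]; nlinarith

theorem milnorWord_mul_zpow_length_inv_mem (l : List Bool) :
    milnorWord u t l * (t ^ (l.length : ℤ))⁻¹ ∈
      closure (zpowConjugates t (Ico 0 l.length) {u}) := by
  induction l with
  | nil => simp [milnorWord]
  | cons b l ih =>
    have hsplit : milnorWord u t (b :: l) * (t ^ ((b :: l).length : ℤ))⁻¹ =
        (if b then u else 1) * (t ^ (1 : ℤ) * (milnorWord u t l * (t ^ (l.length : ℤ))⁻¹) *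
          (t ^ (1 : ℤ))⁻¹) := by
      simp only [milnorWord, List.length_cons, Nat.cast_succ, zpow_add_one]
      group
    rw [hsplit]
    refine mul_mem ?_ (zpow_conj_mem_closure_zpowConjugates ?_ ih)
    · cases b
      · exact one_mem _
      · exact subset_closure ⟨0, ⟨le_rfl, by simp⟩, u, rfl, by simp⟩
    · rintro i ⟨hi₀, hi⟩
      simp only [List.length_cons, Nat.cast_succ, mem_Ico]
      omega

theorem mem_closure_zpowConjugates_of_mul_milnorWord_eq {l₁ l₂ : List Bool}
    (hlen : l₁.length = l₂.length) (h : u * t * milnorWord u t l₁ = t * milnorWord u t l₂) :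
    u ∈ closure (zpowConjugates t (Icc 1 l₁.length) {u}) := by
  have hw₁ := milnorWord_mul_zpow_length_inv_mem u t l₁
  have hw₂ := milnorWord_mul_zpow_length_inv_mem u t l₂
  rw [← hlen] at hw₂
  have hmem := zpow_conj_mem_closure_zpowConjugates (k := 1) (S := Ico 0 l₁.length)
    (S' := Icc 1 l₁.length) (fun i ⟨hi₀, hi⟩ => ⟨by omega, by omega⟩) (mul_mem hw₂ (inv_mem hw₁))
  convert hmem using 1
  calc u = u * t * milnorWord u t l₁ * (milnorWord u t l₁)⁻¹ * t⁻¹ := by group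
    _ = t * milnorWord u t l₂ * (milnorWord u t l₁)⁻¹ * t⁻¹ := by rw [h]
    _ = _ := by group

theorem mem_closure_zpowConjugates_of_milnorWord_eq {l₁ l₂ : List Bool}
    (hlen : l₁.length = l₂.length) (hne : l₁ ≠ l₂) (h : milnorWord u t l₁ = milnorWord u t l₂) :
    u ∈ closure (zpowConjugates t (Icc 1 l₁.length) {u}) := by
  induction l₁ generalizing l₂ with
  | nil => cases l₂ <;> simp_all
  | cons a s₁ ih =>
    obtain _ | ⟨b, s₂⟩ := l₂
    · simp at hlen
    have hlen' : s₁.length = s₂.length := by simpa using hlen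
    have hmono : closure (zpowConjugates t (Icc 1 s₁.length) {u}) ≤
        closure (zpowConjugates t (Icc 1 (a :: s₁).length) {u}) :=
      closure_mono (image2_subset_right (Icc_subset_Icc le_rfl (by simp)))
    simp only [milnorWord] at h
    by_cases hab : a = b
    · subst hab
      exact hmono (ih hlen' (by simpa using hne) (mul_left_cancel h))
    · rcases a <;> rcases b <;> simp only [Bool.false_eq_true, ↓reduceIte, one_mul] at h
      · exact absurd rfl hab
      · have hu := mem_closure_zpowConjugates_of_mul_milnorWord_eq u t hlen'.symm h.symm
        rw [← hlen'] at hu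
        exact hmono hu
      · exact hmono (mem_closure_zpowConjugates_of_mul_milnorWord_eq u t hlen' h)
      · exact absurd rfl hab

end MilnorWord

section Growth

variable {X : Finset G}

theorem exists_milnorWord_eq (hX : closure (X : Set G) = ⊤)
    (hgrowth : Tendsto (fun n : ℕ => Real.log (growth (X : Set G) n) / n) atTop (𝓝 0))
    (u t : G) : ∃ l₁ l₂ : List Bool,
      l₁.length = l₂.length ∧ l₁ ≠ l₂ ∧ milnorWord u t l₁ = milnorWord u t l₂ := by
  set C := wordLength (X : Set G) u + wordLength (X : Set G) t + 1
  obtain ⟨n, hn⟩ := exists_lt_two_pow_of_tendsto_log_div hgrowth (Nat.succ_pos _ : 0 < C)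
  by_contra! hinj
  have hinj' : Function.Injective fun ε : Fin n → Bool => milnorWord u t (List.ofFn ε) :=
    fun ε δ h => List.ofFn_injective (by_contra fun hne => hinj _ _ (by simp) hne h)
  have hball : range (fun ε : Fin n → Bool => milnorWord u t (List.ofFn ε)) ⊆
      {g | wordLength (X : Set G) g ≤ C * n} := by
    rintro _ ⟨ε, rfl⟩
    have := wordLength_milnorWord_le u t hX (List.ofFn ε)
    rw [List.length_ofFn] at this
    exact this.trans (by rw [mul_comm]; gcongr; omega)
  have := ncard_le_ncard hball (finite_setOf_wordLength_le hX _)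
  rw [ncard_range_of_injective hinj', Nat.card_fun] at this
  simp only [Nat.card_eq_fintype_card, Fintype.card_bool, Fintype.card_fin] at this
  exact this.not_gt hn

theorem eventually_mem_closure_zpowConjugates_Icc (hX : closure (X : Set G) = ⊤)
    (hgrowth : Tendsto (fun n : ℕ => Real.log (growth (X : Set G) n) / n) atTop (𝓝 0))
    (u t : G) : ∀ᶠ n : ℕ in atTop, u ∈ closure (zpowConjugates t (Icc 1 n) {u}) := by
  obtain ⟨l₁, l₂, hlen, hne, h⟩ := exists_milnorWord_eq hX hgrowth u t
  refine eventually_atTop.2 ⟨l₁.length, fun n hn => ?_⟩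
  refine closure_mono (image2_subset_right (Icc_subset_Icc le_rfl ?_))
    (mem_closure_zpowConjugates_of_milnorWord_eq u t hlen hne h)
  exact_mod_cast hn

theorem exists_subset_closure_zpowConjugates_Icc (hX : closure (X : Set G) = ⊤)
    (hgrowth : Tendsto (fun n : ℕ => Real.log (growth (X : Set G) n) / n) atTop (𝓝 0))
    {U : Set G} (hU : U.Finite) (t : G) :
    ∃ m : ℕ, U ⊆ closure (zpowConjugates t (Icc 1 m) U) ∧
      U ⊆ closure (zpowConjugates t (Icc (-m) (-1)) U) := by
  obtain ⟨m, hm⟩ := ((eventually_all_finite hU).2 fun u _ =>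
    (eventually_mem_closure_zpowConjugates_Icc hX hgrowth u t).and
      (eventually_mem_closure_zpowConjugates_Icc hX hgrowth u t⁻¹)).exists
  refine ⟨m, fun u hu => ?_, fun u hu => ?_⟩
  · exact closure_mono (image2_subset_left (singleton_subset_iff.2 hu)) (hm u hu).1
  · have hinv := (hm u hu).2
    rw [zpowConjugates_inv, neg_Icc] at hinv
    exact closure_mono (image2_subset_left (singleton_subset_iff.2 hu)) hinv

end Growth

theorem ker_le_of_mem_normalizer {X : Set G} (hX : closure X = ⊤) (φ : G →* Multiplicative ℤ)
    {t : G} {K : Subgroup G} (htK : t ∈ normalizer (K : Set G))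
    (hXK : ∀ x ∈ X, x * (t ^ (φ x).toAdd)⁻¹ ∈ K) : φ.ker ≤ K := by
  have hconj : ∀ k : ℤ, ∀ g ∈ K, t ^ k * g * (t ^ k)⁻¹ ∈ K := fun k g hg =>
    (mem_normalizer_iff.1 (zpow_mem htK k) g).1 hg
  have hall : ∀ g, g * (t ^ (φ g).toAdd)⁻¹ ∈ K := by
    intro g
    induction hX ▸ mem_top g using closure_induction with
    | mem x hx => exact hXK x hx
    | one => simp
    | mul a b _ _ ha hb =>
      have hsplit : a * b * (t ^ (φ (a * b)).toAdd)⁻¹ =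
          a * (t ^ (φ a).toAdd)⁻¹ * (t ^ (φ a).toAdd * (b * (t ^ (φ b).toAdd)⁻¹) *
            (t ^ (φ a).toAdd)⁻¹) := by
        rw [map_mul, toAdd_mul, zpow_add]; group
      rw [hsplit]
      exact mul_mem ha (hconj _ _ hb)
    | inv a _ ha =>
      have hinv : a⁻¹ * (t ^ (φ a⁻¹).toAdd)⁻¹ =
          t ^ (-(φ a).toAdd) * (a * (t ^ (φ a).toAdd)⁻¹)⁻¹ * (t ^ (-(φ a).toAdd))⁻¹ := by
        rw [map_inv, toAdd_inv]; group
      rw [hinv]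
      exact hconj _ _ (inv_mem ha)
  intro g hg
  simpa [MonoidHom.mem_ker.1 hg] using hall g

end

/-- Milnor's lemma: if `G = ⟨X⟩` has subexponential growth and `G/N ≅ ℤ`,
then `N` is finitely generated. -/
theorem milnor_lemma {G : Type*} [Group G] (X : Finset G)
    (hX : Subgroup.closure (X : Set G) = ⊤)
    (hgrowth : Filter.Tendsto
      (fun n : ℕ => Real.log (growth (X : Set G) n) / (n : ℝ))
      Filter.atTop (nhds 0))
    (N : Subgroup G) (hN : N.Normal)
    (hZ : Nonempty ((G ⧸ N) ≃* Multiplicative ℤ)) :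
    N.FG := by
  obtain ⟨e⟩ := hZ
  set φ : G →* Multiplicative ℤ := (e : G ⧸ N →* Multiplicative ℤ).comp (QuotientGroup.mk' N)
  have hker : φ.ker = N := by rw [MonoidHom.ker_mulEquiv_comp, QuotientGroup.ker_mk']
  obtain ⟨t, ht⟩ : ∃ t, φ t = .ofAdd 1 :=
    (e.surjective.comp (QuotientGroup.mk'_surjective N)) _
  set U : Set G := (fun x => x * (t ^ (φ x).toAdd)⁻¹) '' X
  have hUN : U ⊆ N := by
    rintro _ ⟨x, -, rfl⟩
    simp [← hker, ht, ← ofAdd_zsmul]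
  obtain ⟨m, hpos, hneg⟩ :=
    exists_subset_closure_zpowConjugates_Icc hX hgrowth (X.finite_toSet.image _) t
  set K := closure (zpowConjugates t (Icc (-m) m) U)
  have hKN : K ≤ N := closure_le N |>.2 <| by
    rintro _ ⟨i, -, u, hu, rfl⟩
    exact hN.conj_mem u (hUN hu) _
  have hNK : N ≤ K := hker ▸ ker_le_of_mem_normalizer hX φ
    (mem_normalizer_closure_zpowConjugates_Icc hpos hneg)
    fun x hx => subset_closure ⟨0, by simp, _, ⟨x, hx, rfl⟩, by simp⟩
  exact (fg_iff N).2 ⟨_, le_antisymm hKN hNK, (finite_Icc _ _).image2 _ (X.finite_toSet.image _)⟩
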